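/- Let T be a dissection tree of G. For each nonleaf vertex S of T with children S' and S'', we have S ⊆ border(S') ∩ border(S'') and border(S) ⊆ border(S') ∪ border(S''). -/

import Mathlib

open SimpleGraph

universe u

variable {V : Type u}

/-- The weight of a walk: the sum of the weights of its edges. -/
def walkWeight {G : SimpleGraph V} (w : Sym2 V → ℕ) {u v : V} (p : G.Walk u v) : ℕ :=
  (p.edges.map w).sum

/-- A rooted binary tree whose vertices are labeled by subsets of `V`. -/
inductive DTree (V : Type u) : Type u
  | leaf : Set V → DTree V
  | node : Set V → DTree V → DTree V → DTree V

namespace DTree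

/-- `below(S)`: the union of the vertex sets in the subtree rooted at `S`. -/
def belowSet : DTree V → Set V
  | leaf S => S
  | node S l r => S ∪ (l.belowSet ∪ r.belowSet)

end DTree

/-- Node sets `V₁` and `V₂` are dissected by `S` in `G` if no node of `V₁ \ S`
is adjacent to a node of `V₂ \ S`. -/
def Dissects (G : SimpleGraph V) (S V₁ V₂ : Set V) : Prop :=
  ∀ a ∈ V₁ \ S, ∀ b ∈ V₂ \ S, ¬ G.Adj a b

namespace DTree

/-- Property 2 of a dissection tree: each nonleaf vertex `S` with children `S'`, `S''`
satisfies (a) `S ⊆ below(S') ∩ below(S'')` and (b) `below(S')` and `below(S'')` are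
dissected by `S` in `G`. -/
def IsDissection (G : SimpleGraph V) : DTree V → Prop
  | leaf _ => True
  | node S l r =>
      S ⊆ l.belowSet ∩ r.belowSet ∧ Dissects G S l.belowSet r.belowSet ∧
        l.IsDissection G ∧ r.IsDissection G

/-- A dissection tree of `G`: Property 1 (`below(root) = V(G)`) and Property 2. -/
def IsDissectionTree (G : SimpleGraph V) (t : DTree V) : Prop :=
  t.belowSet = Set.univ ∧ t.IsDissection G

/-- `IsSubtree s t` means `s` occurs as a subtree of `t`, i.e. `s` is a vertex of the
tree `t` (together with everything below it). -/
inductive IsSubtree : DTree V → DTree V → Prop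
  | refl (t : DTree V) : IsSubtree t t
  | left {s l r : DTree V} {S : Set V} : IsSubtree s l → IsSubtree s (node S l r)
  | right {s l r : DTree V} {S : Set V} : IsSubtree s r → IsSubtree s (node S l r)

end DTree

namespace DTree

/-- `SubtreeAbove t A s`: the tree `s` occurs as a subtree (vertex) of `t`, and `A`
is `above(s)`, the union of the ancestor vertex sets of `s` in `t`. -/
inductive SubtreeAbove (t : DTree V) : Set V → DTree V → Prop
  | refl : SubtreeAbove t ∅ t
  | left {A S : Set V} {l r : DTree V} :
      SubtreeAbove t A (node S l r) → SubtreeAbove t (A ∪ S) l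
  | right {A S : Set V} {l r : DTree V} :
      SubtreeAbove t A (node S l r) → SubtreeAbove t (A ∪ S) r

/-- `borderOf A s`: the border of the vertex `s`, where `A = above(s)`.  With
`inherit(s) = above(s) ∩ below(s)`, the border of a leaf is `inherit(s)` and the
border of a nonleaf is `s ∪ inherit(s)`. -/
def borderOf (A : Set V) : DTree V → Set V
  | leaf S => A ∩ S
  | node S l r => S ∪ (A ∩ (node S l r).belowSet)

end DTree

/-! The children of `node S l r` have above-set `A ∪ S`, so by Property 2a every element of `S`
is inherited by both children; an element of `A ∩ below(S)` outside `S` lies below one of the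
children and is inherited by it. -/

namespace DTree

theorem SubtreeAbove.isDissection {G : SimpleGraph V} {t s : DTree V} {A : Set V}
    (h : SubtreeAbove t A s) (ht : t.IsDissection G) : s.IsDissection G := by
  induction h with
  | refl => exact ht
  | left _ ih => exact ih.2.2.1
  | right _ ih => exact ih.2.2.2

theorem inter_belowSet_subset_borderOf (A : Set V) (s : DTree V) :
    A ∩ s.belowSet ⊆ borderOf A s := by
  cases s with
  | leaf S => exact subset_rfl
  | node S l r => exact Set.subset_union_right

theorem subset_borderOf_of_subset_belowSet {A S : Set V} {s : DTree V}
    (h : S ⊆ s.belowSet) : S ⊆ borderOf (A ∪ S) s := fun _ hx =>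
  inter_belowSet_subset_borderOf _ _ ⟨Or.inr hx, h hx⟩

theorem borderOf_node_subset_union {A S : Set V} {l r : DTree V} (h : S ⊆ l.belowSet) :
    borderOf A (node S l r) ⊆ borderOf (A ∪ S) l ∪ borderOf (A ∪ S) r := by
  rintro x (hx | ⟨hxA, hx | hx | hx⟩)
  · exact Or.inl (subset_borderOf_of_subset_belowSet h hx)
  · exact Or.inl (subset_borderOf_of_subset_belowSet h hx)
  · exact Or.inl (inter_belowSet_subset_borderOf _ _ ⟨Or.inl hxA, hx⟩)
  · exact Or.inr (inter_belowSet_subset_borderOf _ _ ⟨Or.inl hxA, hx⟩)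

end DTree

open DTree in
/-- Let `T` be a dissection tree of `G`.  For each nonleaf vertex
`S` of `T` with children `S'` and `S''`, we have `S ⊆ border(S') ∩ border(S'')`
and `border(S) ⊆ border(S') ∪ border(S'')`. -/
theorem border_subset_of_dissection {V : Type*} (G : SimpleGraph V)
    (t : DTree V) (ht : IsDissectionTree G t)
    (A S : Set V) (l r : DTree V)
    (hsub : SubtreeAbove t A (DTree.node S l r)) :
    S ⊆ borderOf (A ∪ S) l ∩ borderOf (A ∪ S) r ∧
      borderOf A (DTree.node S l r) ⊆ borderOf (A ∪ S) l ∪ borderOf (A ∪ S) r := by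
  obtain ⟨hl, hr⟩ := Set.subset_inter_iff.1 (hsub.isDissection ht.2).1
  exact ⟨Set.subset_inter (subset_borderOf_of_subset_belowSet hl)
    (subset_borderOf_of_subset_belowSet hr), borderOf_node_subset_union hl⟩
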